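/- arXiv:2311.11719 — 5 statements merged into one kernel-verified Lean document; each statement's English description precedes it below -/
import Mathlib

section
/- Let a_0, ..., a_n ∈ ℤ_p^× and b_0, ..., b_n ∈ ℚ_p with b_1, ..., b_n ∈ pℤ_p. Then for all x, y ∈ pℤ_p, the p-adic distance between the finite continued fractions b_0/(a_0 + b_1/(a_1 + ... + b_n/(a_n + x))) and b_0/(a_0 + b_1/(a_1 + ... + b_n/(a_n + y))) equals |x - y|_p · ∏_{i=0}^n |b_i|_p, which is at most p^{-n}|b_0|_p. -/
open scoped Classical in
noncomputable def eps {p : ℕ} [Fact p.Prime] (x : ℚ_[p]) : ℚ_[p] :=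
  if x = 0 then 1 else (p : ℚ_[p]) ^ (-x.valuation) * x

noncomputable def fdigit {p : ℕ} [Fact p.Prime] (x : ℚ_[p]) : ℕ :=
  if h : ‖x‖ ≤ 1 then ((PadicInt.toZMod (⟨x, h⟩ : ℤ_[p])).val) else 0

noncomputable def tau {p : ℕ} [Fact p.Prime] (x : ℚ_[p]) : ℚ_[p] :=
  1 / eps x - (fdigit (1 / eps x) : ℚ_[p])

noncomputable def sigma {p : ℕ} [Fact p.Prime] (x : ℚ_[p]) : ℚ_[p] :=
  eps x - (fdigit (eps x) : ℚ_[p])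

/-- `f(x) = Σ_{n=0}^∞ ⌊1/ε(τⁿ x)⌋_p ∏_{m=0}^n τᵐ x / ε(τᵐ x)` -/
noncomputable def schneiderF {p : ℕ} [Fact p.Prime] (x : ℚ_[p]) : ℚ_[p] :=
  ∑' n : ℕ, (fdigit (1 / eps (tau^[n] x)) : ℚ_[p]) *
    ∏ m ∈ Finset.range (n + 1), (tau^[m] x) / eps (tau^[m] x)

/-- Finite continued fraction `b 0 / (a 0 + b 1 / (a 1 + ⋯ + b n / (a n + x)))`. -/
noncomputable def cf {p : ℕ} [Fact p.Prime] : (ℕ → ℚ_[p]) → (ℕ → ℚ_[p]) → ℕ → ℚ_[p] → ℚ_[p]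
  | a, b, 0, x => b 0 / (a 0 + x)
  | a, b, n + 1, x => b 0 / (a 0 + cf (fun i => a (i + 1)) (fun i => b (i + 1)) n x)

/-!
If `‖a‖ = 1` and `‖t‖ < 1`, the ultrametric inequality gives `‖a + t‖ = 1`, so on the open unit
ball the map `t ↦ b / (a + t)` multiplies distances by exactly `‖b‖` and takes values of norm at
most `‖b‖`. The continued fraction is a composition of such maps, and every inner one lands in the
open unit ball because `‖b i‖ < 1` for `i ≥ 1`; this gives the product formula. Finally
`‖b i‖ < 1` forces `‖b i‖ ≤ p⁻¹` in `ℚ_[p]`.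
-/

namespace IsUltrametricDist

variable {K : Type*} [NormedField K] [IsUltrametricDist K]

lemma norm_add_eq_one {a x : K} (ha : ‖a‖ = 1) (hx : ‖x‖ < 1) : ‖a + x‖ = 1 := by
  rw [norm_add_eq_max_of_norm_ne_norm (ha ▸ hx.ne'), ha, max_eq_left hx.le]

lemma norm_sub_le_one {x y : K} (hx : ‖x‖ ≤ 1) (hy : ‖y‖ ≤ 1) : ‖x - y‖ ≤ 1 := by
  simpa [sub_eq_add_neg] using (norm_add_le_max x (-y)).trans (max_le hx (by rwa [norm_neg]))

lemma norm_div_add_sub_div_add {a b x y : K} (ha : ‖a‖ = 1) (hx : ‖x‖ < 1)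
    (hy : ‖y‖ < 1) : ‖b / (a + x) - b / (a + y)‖ = ‖x - y‖ * ‖b‖ := by
  have hax := norm_add_eq_one ha hx
  have hay := norm_add_eq_one ha hy
  have hax₀ : a + x ≠ 0 := norm_ne_zero_iff.mp (by simp [hax])
  have hay₀ : a + y ≠ 0 := norm_ne_zero_iff.mp (by simp [hay])
  have : b / (a + x) - b / (a + y) = b * (y - x) / ((a + x) * (a + y)) := by
    field_simp; ring
  rw [this, norm_div, norm_mul, norm_mul, hax, hay, norm_sub_rev]
  ring

end IsUltrametricDist

open IsUltrametricDist

section Padic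

variable {p : ℕ} [Fact p.Prime]

lemma Padic.prod_norm_le_of_norm_lt_one {ι : Type*} {s : Finset ι} {b : ι → ℚ_[p]}
    (hb : ∀ i ∈ s, ‖b i‖ < 1) : ∏ i ∈ s, ‖b i‖ ≤ (p : ℝ) ^ (-(s.card : ℤ)) := by
  have hle : ∀ i ∈ s, ‖b i‖ ≤ (p : ℝ) ^ (-1 : ℤ) := fun i hi =>
    (Padic.norm_le_pow_iff_norm_lt_pow_add_one _ _).mpr (by simpa using hb i hi)
  calc ∏ i ∈ s, ‖b i‖ ≤ ∏ _i ∈ s, (p : ℝ) ^ (-1 : ℤ) :=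
        Finset.prod_le_prod (fun _ _ => norm_nonneg _) hle
    _ = (p : ℝ) ^ (-(s.card : ℤ)) := by
        rw [Finset.prod_const, ← zpow_natCast, ← zpow_mul, neg_one_mul]

lemma cf_succ (a b : ℕ → ℚ_[p]) (n : ℕ) (x : ℚ_[p]) :
    cf a b (n + 1) x = b 0 / (a 0 + cf (fun i => a (i + 1)) (fun i => b (i + 1)) n x) :=
  rfl

lemma norm_cf_le {n : ℕ} {a b : ℕ → ℚ_[p]} (ha : ∀ i ≤ n, ‖a i‖ = 1)
    (hb : ∀ i, 1 ≤ i → i ≤ n → ‖b i‖ < 1) {x : ℚ_[p]} (hx : ‖x‖ < 1) :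
    ‖cf a b n x‖ ≤ ‖b 0‖ := by
  induction n generalizing a b with
  | zero => rw [cf, norm_div, norm_add_eq_one (ha 0 le_rfl) hx, div_one]
  | succ n ih =>
    have htail : ‖cf (fun i => a (i + 1)) (fun i => b (i + 1)) n x‖ < 1 :=
      (ih (fun i hi => ha (i + 1) (by omega))
        (fun i _ hi => hb (i + 1) (by omega) (by omega))).trans_lt (hb 1 le_rfl (by omega))
    rw [cf_succ, norm_div, norm_add_eq_one (ha 0 (by omega)) htail, div_one]

lemma norm_cf_sub_cf {n : ℕ} {a b : ℕ → ℚ_[p]} (ha : ∀ i ≤ n, ‖a i‖ = 1)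
    (hb : ∀ i, 1 ≤ i → i ≤ n → ‖b i‖ < 1) {x y : ℚ_[p]} (hx : ‖x‖ < 1) (hy : ‖y‖ < 1) :
    ‖cf a b n x - cf a b n y‖ = ‖x - y‖ * ∏ i ∈ Finset.range (n + 1), ‖b i‖ := by
  induction n generalizing a b with
  | zero => rw [cf, cf, norm_div_add_sub_div_add (ha 0 le_rfl) hx hy, Finset.prod_range_one]
  | succ n ih =>
    have ha' : ∀ i ≤ n, ‖a (i + 1)‖ = 1 := fun i hi => ha (i + 1) (by omega)
    have hb' : ∀ i, 1 ≤ i → i ≤ n → ‖b (i + 1)‖ < 1 :=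
      fun i _ hi => hb (i + 1) (by omega) (by omega)
    have hb₁ : ‖b 1‖ < 1 := hb 1 le_rfl (by omega)
    rw [cf_succ, cf_succ, norm_div_add_sub_div_add (ha 0 (by omega))
        ((norm_cf_le ha' hb' hx).trans_lt hb₁) ((norm_cf_le ha' hb' hy).trans_lt hb₁),
      ih ha' hb', Finset.prod_range_succ' _ (n + 1)]
    ring

end Padic

theorem dist_cf (p : ℕ) [Fact p.Prime] (n : ℕ) (a b : ℕ → ℚ_[p])
    (ha : ∀ i ≤ n, ‖a i‖ = 1) (hb : ∀ i, 1 ≤ i → i ≤ n → ‖b i‖ < 1)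
    (x y : ℚ_[p]) (hx : ‖x‖ < 1) (hy : ‖y‖ < 1) :
    ‖cf a b n x - cf a b n y‖ = ‖x - y‖ * ∏ i ∈ Finset.range (n + 1), ‖b i‖ ∧
    ‖x - y‖ * ∏ i ∈ Finset.range (n + 1), ‖b i‖ ≤ (p : ℝ) ^ (-(n : ℤ)) * ‖b 0‖ := by
  refine ⟨norm_cf_sub_cf ha hb hx hy, ?_⟩
  have htail : ∏ i ∈ Finset.range n, ‖b (i + 1)‖ ≤ (p : ℝ) ^ (-(n : ℤ)) := by
    simpa using Padic.prod_norm_le_of_norm_lt_one (s := Finset.range n)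
      (b := fun i => b (i + 1)) fun i hi => hb (i + 1) (by omega) (by simp at hi; omega)
  calc ‖x - y‖ * ∏ i ∈ Finset.range (n + 1), ‖b i‖
      ≤ 1 * ((p : ℝ) ^ (-(n : ℤ)) * ‖b 0‖) := by
        rw [Finset.prod_range_succ']
        gcongr
        exact norm_sub_le_one hx.le hy.le
    _ = (p : ℝ) ^ (-(n : ℤ)) * ‖b 0‖ := one_mul _
end

section
/- Let (a_n) be a sequence in ℤ_p^× and (b_n) a sequence in ℚ_p with |b_{n+1}|_p < 1 for all n ∈ ℕ. Then the sequence of finite continued fraction convergents P_n := b_0/(a_0 + b_1/(a_1 + ... + b_n/a_n)) converges in ℚ_p. -/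
lemma padic_lt_one_le_inv {p : ℕ} [hp : Fact p.Prime] {x : ℚ_[p]} (h : ‖x‖ < 1) :
    ‖x‖ ≤ (p : ℝ)⁻¹ := by
  have := (Padic.norm_lt_pow_iff_norm_le_pow_sub_one x 0).mp (by simpa using h)
  simpa [zpow_neg] using this

lemma denom_norm_one {p : ℕ} [hp : Fact p.Prime] {u x : ℚ_[p]} (hu : ‖u‖ = 1)
    (hx : ‖x‖ < 1) : ‖u + x‖ = 1 := by
  have hne : ‖x‖ ≠ ‖u‖ := by rw [hu]; exact hx.ne
  rw [Padic.add_eq_max_of_ne (Ne.symm hne), hu]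
  exact max_eq_left hx.le

lemma cf_norm {p : ℕ} [hp : Fact p.Prime] : ∀ (n : ℕ) (a b : ℕ → ℚ_[p]) (x : ℚ_[p]),
    (∀ i, ‖a i‖ = 1) → (∀ i, ‖b (i + 1)‖ < 1) → ‖x‖ < 1 → ‖cf a b n x‖ = ‖b 0‖
  | 0, a, b, x, ha, hb, hx => by
    rw [cf, norm_div, denom_norm_one (ha 0) hx, div_one]
  | n + 1, a, b, x, ha, hb, hx => by
    have h1 : ‖cf (fun i => a (i + 1)) (fun i => b (i + 1)) n x‖ = ‖b 1‖ :=
      cf_norm n _ _ x (fun i => ha (i + 1)) (fun i => hb (i + 1)) hx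
    rw [cf, norm_div, denom_norm_one (ha 0) (h1 ▸ (h1.symm ▸ hb 0)), div_one]

lemma cf_diff {p : ℕ} [hp : Fact p.Prime] : ∀ (n : ℕ) (a b : ℕ → ℚ_[p]) (x y : ℚ_[p]),
    (∀ i, ‖a i‖ = 1) → (∀ i, ‖b (i + 1)‖ < 1) → ‖x‖ < 1 → ‖y‖ < 1 →
    ‖cf a b n x - cf a b n y‖ ≤ ‖b 0‖ * ((p : ℝ)⁻¹) ^ n * ‖x - y‖
  | 0, a, b, x, y, ha, hb, hx, hy => by
    have hcx : ‖a 0 + x‖ = 1 := denom_norm_one (ha 0) hx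
    have hcy : ‖a 0 + y‖ = 1 := denom_norm_one (ha 0) hy
    have hx0 : a 0 + x ≠ 0 := fun h => by simp [h] at hcx
    have hy0 : a 0 + y ≠ 0 := fun h => by simp [h] at hcy
    have : cf a b 0 x - cf a b 0 y = b 0 * (y - x) / ((a 0 + x) * (a 0 + y)) := by
      rw [cf, cf]; field_simp; ring
    rw [this, norm_div, norm_mul, norm_mul, hcx, hcy, norm_sub_rev]
    simp
  | n + 1, a, b, x, y, ha, hb, hx, hy => by
    set a' : ℕ → ℚ_[p] := fun i => a (i + 1) with ha'
    set b' : ℕ → ℚ_[p] := fun i => b (i + 1) with hb'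
    have ha'1 : ∀ i, ‖a' i‖ = 1 := fun i => ha (i + 1)
    have hb'1 : ∀ i, ‖b' (i + 1)‖ < 1 := fun i => hb (i + 1)
    have hX : ‖cf a' b' n x‖ < 1 := by
      rw [cf_norm n a' b' x ha'1 hb'1 hx]; exact hb 0
    have hY : ‖cf a' b' n y‖ < 1 := by
      rw [cf_norm n a' b' y ha'1 hb'1 hy]; exact hb 0
    have hcx : ‖a 0 + cf a' b' n x‖ = 1 := denom_norm_one (ha 0) hX
    have hcy : ‖a 0 + cf a' b' n y‖ = 1 := denom_norm_one (ha 0) hY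
    have hx0 : a 0 + cf a' b' n x ≠ 0 := fun h => by simp [h] at hcx
    have hy0 : a 0 + cf a' b' n y ≠ 0 := fun h => by simp [h] at hcy
    have heq : cf a b (n + 1) x - cf a b (n + 1) y =
        b 0 * (cf a' b' n y - cf a' b' n x) /
          ((a 0 + cf a' b' n x) * (a 0 + cf a' b' n y)) := by
      rw [cf, cf, ← ha', ← hb']; field_simp; ring
    have hrec : ‖cf a' b' n x - cf a' b' n y‖ ≤ ‖b' 0‖ * ((p : ℝ)⁻¹) ^ n * ‖x - y‖ :=
      cf_diff n a' b' x y ha'1 hb'1 hx hy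
    have hb1 : ‖b' 0‖ ≤ (p : ℝ)⁻¹ := padic_lt_one_le_inv (hb 0)
    rw [heq, norm_div, norm_mul, norm_mul, hcx, hcy, norm_sub_rev]
    have hnn : (0 : ℝ) ≤ ((p : ℝ)⁻¹) ^ n * ‖x - y‖ := by positivity
    calc ‖b 0‖ * ‖cf a' b' n x - cf a' b' n y‖ / (1 * 1)
        = ‖b 0‖ * ‖cf a' b' n x - cf a' b' n y‖ := by ring
      _ ≤ ‖b 0‖ * (‖b' 0‖ * ((p : ℝ)⁻¹) ^ n * ‖x - y‖) := by
          exact mul_le_mul_of_nonneg_left hrec (norm_nonneg _)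
      _ ≤ ‖b 0‖ * ((p : ℝ)⁻¹ * ((p : ℝ)⁻¹) ^ n * ‖x - y‖) := by
          apply mul_le_mul_of_nonneg_left _ (norm_nonneg _)
          apply mul_le_mul_of_nonneg_right _ (norm_nonneg _)
          exact mul_le_mul_of_nonneg_right hb1 (by positivity)
      _ = ‖b 0‖ * ((p : ℝ)⁻¹) ^ (n + 1) * ‖x - y‖ := by ring

lemma cf_succ_eq {p : ℕ} [hp : Fact p.Prime] : ∀ (n : ℕ) (a b : ℕ → ℚ_[p]) (x : ℚ_[p]),
    cf a b (n + 1) x = cf a b n (b (n + 1) / (a (n + 1) + x))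
  | 0, a, b, x => by simp [cf]
  | n + 1, a, b, x => by
    rw [cf, cf_succ_eq n, cf]

theorem cf_convergents_converge (p : ℕ) [Fact p.Prime] (a b : ℕ → ℚ_[p])
    (ha : ∀ n, ‖a n‖ = 1) (hb : ∀ n, ‖b (n + 1)‖ < 1) :
    ∃ L : ℚ_[p], Filter.Tendsto (fun n => cf a b n 0) Filter.atTop (nhds L) := by
  have hp1 : 1 < (p : ℝ) := by exact_mod_cast (Fact.out : p.Prime).one_lt
  have hr : (p : ℝ)⁻¹ < 1 := inv_lt_one_of_one_lt₀ hp1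
  have hcauchy : CauchySeq (fun n => cf a b n 0) := by
    apply cauchySeq_of_le_geometric ((p : ℝ)⁻¹) ‖b 0‖ hr
    intro n
    have ht : ‖b (n + 1) / (a (n + 1) + 0)‖ < 1 := by
      rw [add_zero, norm_div, ha (n + 1), div_one]; exact hb n
    have h0 : ‖(0 : ℚ_[p])‖ < 1 := by simp
    have := cf_diff n a b 0 (b (n + 1) / (a (n + 1) + 0)) ha hb h0 ht
    rw [dist_eq_norm, cf_succ_eq n a b 0]
    refine this.trans ?_
    have : ‖(0 : ℚ_[p]) - b (n + 1) / (a (n + 1) + 0)‖ ≤ 1 := by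
      rw [zero_sub, norm_neg]; exact ht.le
    calc ‖b 0‖ * ((p : ℝ)⁻¹) ^ n * ‖(0 : ℚ_[p]) - b (n + 1) / (a (n + 1) + 0)‖
        ≤ ‖b 0‖ * ((p : ℝ)⁻¹) ^ n * 1 := by
          exact mul_le_mul_of_nonneg_left this (by positivity)
      _ = ‖b 0‖ * ((p : ℝ)⁻¹) ^ n := by ring
  exact cauchySeq_tendsto_of_complete hcauchy
end

section
/- For every x ∈ ℚ_p and n ∈ ℕ, x equals the finite continued fraction b_0/(a_0 + b_1/(a_1 + ... + b_n/(a_n + τ^{n+1}(x)))), where for each k, x_k := τ^k(x), a_k := ⌊1/ε(x_k)⌋_p, and b_k := x_k/ε(x_k). -/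
/-! Since `⌊1/ε(x)⌋_p + τ(x) = 1/ε(x)`, every `x` satisfies `x = (x/ε(x)) / (⌊1/ε(x)⌋_p + τ(x))`,
a one-level continued fraction. Substituting the same identity for `τ(x)` in the innermost
denominator, by induction on `n` for all `x` at once, gives the `n`-level one. -/

namespace Schneider

variable {p : ℕ} [Fact p.Prime]

lemma eps_ne_zero (x : ℚ_[p]) : eps x ≠ 0 := by
  unfold eps
  split_ifs with hx
  · exact one_ne_zero
  · exact mul_ne_zero (zpow_ne_zero _ (Nat.cast_ne_zero.mpr (Fact.out : p.Prime).ne_zero)) hx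

lemma fdigit_add_tau (x : ℚ_[p]) : (fdigit (1 / eps x) : ℚ_[p]) + tau x = 1 / eps x := by
  unfold tau
  ring

lemma eq_div_eps_div_fdigit_add_tau (x : ℚ_[p]) :
    x = (x / eps x) / ((fdigit (1 / eps x) : ℚ_[p]) + tau x) := by
  rw [fdigit_add_tau]
  field_simp [eps_ne_zero x]

end Schneider

open Schneider in
theorem schneider_cf_eq (p : ℕ) [Fact p.Prime] (x : ℚ_[p]) (n : ℕ) :
    x = cf (fun k => (fdigit (1 / eps (tau^[k] x)) : ℚ_[p]))
      (fun k => tau^[k] x / eps (tau^[k] x)) n (tau^[n + 1] x) := by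
  induction n generalizing x with
  | zero => exact eq_div_eps_div_fdigit_add_tau x
  | succ n ih =>
    have iterate_shift : ∀ k, tau^[k + 1] x = tau^[k] (tau x) :=
      fun k => Function.iterate_succ_apply tau k x
    simp only [cf, Function.iterate_zero, id_eq, iterate_shift]
    rw [← ih (tau x)]
    exact eq_div_eps_div_fdigit_add_tau x
end

section
/- For every x ∈ ℚ_p, the convergents P_n of Schneider's continued fraction of x (with partial quotients a_k := ⌊1/ε(τ^k(x))⌋_p and numerators b_k := τ^k(x)/ε(τ^k(x))) satisfy |x - P_n|_p ≤ p^{-n}|x|_p, and hence P_n → x in ℚ_p. -/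
/-! Write `1 / ε(x) = a₀ + τ(x)` with `a₀ = ⌊1/ε(x)⌋_p`, so that `|τ(x)|_p ≤ 1/p` and the first
numerator is `b₀ = x (a₀ + τ(x))`. Then `x - b₀ / (a₀ + c) = x (c - τ(x)) / (a₀ + c)`, and
`a₀ + c = 1/ε(x) - (τ(x) - c)` is a unit as soon as `|τ(x) - c|_p < 1`. Taking for `c` the
convergent of `τ(x)`, the error of `P_{n+1}` at `x` is `|x|_p` times the error of `P_n` at `τ(x)`,
and induction gives `|x - P_n|_p ≤ p^{-(n+1)} |x|_p`. -/

lemma Nat.Prime.inv_cast_lt_one {p : ℕ} (hp : p.Prime) : (p : ℝ)⁻¹ < 1 :=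
  inv_lt_one_of_one_lt₀ (by exact_mod_cast hp.one_lt)

section Schneider

variable {p : ℕ} [Fact p.Prime]

lemma norm_eps (x : ℚ_[p]) : ‖eps x‖ = 1 := by
  by_cases hx : x = 0
  · simp [eps, hx]
  · have hp : (p : ℝ) ≠ 0 := by exact_mod_cast (Fact.out : p.Prime).ne_zero
    rw [eps, if_neg hx, norm_mul, Padic.norm_p_zpow, Padic.norm_eq_zpow_neg_valuation hx,
      neg_neg, ← zpow_add₀ hp, add_neg_cancel, zpow_zero]

lemma norm_sub_fdigit_le {y : ℚ_[p]} (hy : ‖y‖ ≤ 1) : ‖y - fdigit y‖ ≤ (p : ℝ)⁻¹ := by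
  set z : ℤ_[p] := ⟨y, hy⟩
  have hdigit : y - fdigit y = ((z - ZMod.cast (PadicInt.toZMod z) : ℤ_[p]) : ℚ_[p]) := by
    rw [← ZMod.natCast_val, PadicInt.coe_sub, PadicInt.coe_natCast]
    simp [fdigit, hy, z]
  have hlt : ‖y - fdigit y‖ < 1 := by
    rw [hdigit, ← PadicInt.norm_def]
    exact PadicInt.mem_nonunits.mp (PadicInt.toZMod_spec z)
  simpa using (Padic.norm_le_pow_iff_norm_lt_pow_add_one _ (-1)).mpr (by simpa using hlt)

lemma norm_tau_le (x : ℚ_[p]) : ‖tau x‖ ≤ (p : ℝ)⁻¹ :=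
  norm_sub_fdigit_le (by simp [norm_eps])

lemma norm_sub_div_eps_div_fdigit_add (x c : ℚ_[p]) (hc : ‖tau x - c‖ < 1) :
    ‖x - x / eps x / (fdigit (1 / eps x) + c)‖ = ‖x‖ * ‖tau x - c‖ := by
  have hunit : ‖(1 / eps x : ℚ_[p])‖ = 1 := by simp [norm_eps]
  have hden : (fdigit (1 / eps x) : ℚ_[p]) + c = 1 / eps x - (tau x - c) := by
    rw [tau]; ring
  have hden_norm : ‖(fdigit (1 / eps x) : ℚ_[p]) + c‖ = 1 := by
    rw [hden, sub_eq_add_neg, IsUltrametricDist.norm_add_eq_max_of_norm_ne_norm] <;>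
      rw [norm_neg, hunit]
    exacts [max_eq_left hc.le, hc.ne']
  have hden_ne : (fdigit (1 / eps x) : ℚ_[p]) + c ≠ 0 :=
    norm_ne_zero_iff.mp (hden_norm ▸ one_ne_zero)
  have hid : x - x / eps x / (fdigit (1 / eps x) + c) =
      x * (c - tau x) / (fdigit (1 / eps x) + c) := by
    have hnum : x / eps x = x * (fdigit (1 / eps x) + tau x) := by rw [tau]; ring
    rw [hnum]
    field_simp
    ring
  rw [hid, norm_div, norm_mul, hden_norm, div_one, norm_sub_rev]

noncomputable def schneiderConvergent (x : ℚ_[p]) (n : ℕ) : ℚ_[p] :=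
  cf (fun k => (fdigit (1 / eps (tau^[k] x)) : ℚ_[p])) (fun k => tau^[k] x / eps (tau^[k] x)) n 0

lemma schneiderConvergent_zero (x : ℚ_[p]) :
    schneiderConvergent x 0 = x / eps x / (fdigit (1 / eps x) + 0) := rfl

lemma schneiderConvergent_succ (x : ℚ_[p]) (n : ℕ) :
    schneiderConvergent x (n + 1) =
      x / eps x / (fdigit (1 / eps x) + schneiderConvergent (tau x) n) := rfl

lemma norm_sub_schneiderConvergent_le (n : ℕ) (x : ℚ_[p]) :
    ‖x - schneiderConvergent x n‖ ≤ (p : ℝ)⁻¹ ^ (n + 1) * ‖x‖ := by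
  have hp := (Fact.out : p.Prime).inv_cast_lt_one
  induction n generalizing x with
  | zero =>
    have htau : ‖tau x - 0‖ < 1 := by simpa using (norm_tau_le x).trans_lt hp
    rw [schneiderConvergent_zero, norm_sub_div_eps_div_fdigit_add _ _ htau, sub_zero, pow_one,
      mul_comm]
    gcongr
    exact norm_tau_le x
  | succ n ih =>
    have htail : ‖tau x - schneiderConvergent (tau x) n‖ ≤ (p : ℝ)⁻¹ ^ (n + 2) :=
      calc ‖tau x - schneiderConvergent (tau x) n‖
          ≤ (p : ℝ)⁻¹ ^ (n + 1) * ‖tau x‖ := ih (tau x)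
        _ ≤ (p : ℝ)⁻¹ ^ (n + 1) * (p : ℝ)⁻¹ := by gcongr; exact norm_tau_le x
        _ = (p : ℝ)⁻¹ ^ (n + 2) := (pow_succ _ _).symm
    have hlt : ‖tau x - schneiderConvergent (tau x) n‖ < 1 :=
      htail.trans_lt (pow_lt_one₀ (by positivity) hp (by omega))
    rw [schneiderConvergent_succ, norm_sub_div_eps_div_fdigit_add _ _ hlt, mul_comm]
    gcongr

end Schneider

theorem schneider_convergents_tendsto (p : ℕ) [Fact p.Prime] (x : ℚ_[p]) :
    (∀ n : ℕ, ‖x - cf (fun k => (fdigit (1 / eps (tau^[k] x)) : ℚ_[p]))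
        (fun k => tau^[k] x / eps (tau^[k] x)) n 0‖ ≤ (p : ℝ) ^ (-(n : ℤ)) * ‖x‖) ∧
    Filter.Tendsto (fun n => cf (fun k => (fdigit (1 / eps (tau^[k] x)) : ℚ_[p]))
        (fun k => tau^[k] x / eps (tau^[k] x)) n 0) Filter.atTop (nhds x) := by
  have hp := (Fact.out : p.Prime).inv_cast_lt_one
  refine ⟨fun n => ?_, ?_⟩
  · rw [zpow_neg, zpow_natCast, ← inv_pow]
    exact (norm_sub_schneiderConvergent_le n x).trans
      (mul_le_mul_of_nonneg_right (pow_le_pow_of_le_one (by positivity) hp.le n.le_succ)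
        (norm_nonneg x))
  · rw [tendsto_iff_norm_sub_tendsto_zero]
    have hgeom :
        Filter.Tendsto (fun n : ℕ => (p : ℝ)⁻¹ ^ (n + 1) * ‖x‖) Filter.atTop (nhds 0) := by
      simpa using ((tendsto_pow_atTop_nhds_zero_of_lt_one (by positivity) hp).comp
        (Filter.tendsto_add_atTop_nat 1)).mul_const ‖x‖
    exact squeeze_zero (fun n => norm_nonneg _)
      (fun n => norm_sub_rev x _ ▸ norm_sub_schneiderConvergent_le n x) hgeom
end

section
/- In ℚ_p, the element -p equals the infinite periodic continued fraction p/(p-1 + p/(p-1 + p/(p-1 + ...))), i.e., -p = Σ_{n=1}^∞ (p-1)p^n, and consequently -p is a fixed point of the map f. -/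
section Aux

variable {p : ℕ} [Fact p.Prime]

lemma aux_val_neg (x : ℚ_[p]) (hx : x ≠ 0) : (-x).valuation = x.valuation := by
  have h1 := Padic.norm_eq_zpow_neg_valuation (neg_ne_zero.mpr hx)
  rw [norm_neg, Padic.norm_eq_zpow_neg_valuation hx] at h1
  have hlt : (1 : ℝ) < (p : ℝ) := mod_cast (Fact.out (p := p.Prime)).one_lt
  exact neg_injective ((zpow_right_strictMono₀ hlt).injective h1.symm)

lemma aux_p_ne_zero : (p : ℚ_[p]) ≠ 0 :=
  Nat.cast_ne_zero.mpr (Fact.out (p := p.Prime)).ne_zero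

lemma aux_eps_neg_p : eps (-(p : ℚ_[p])) = -1 := by
  have hne : -(p : ℚ_[p]) ≠ 0 := neg_ne_zero.mpr aux_p_ne_zero
  have hval : (-(p : ℚ_[p])).valuation = 1 := by
    rw [aux_val_neg _ aux_p_ne_zero, Padic.valuation_p]
  rw [eps, if_neg hne, hval]
  rw [zpow_neg_one]
  rw [mul_neg, inv_mul_cancel₀ aux_p_ne_zero]

lemma aux_fdigit_neg_one : fdigit (-1 : ℚ_[p]) = p - 1 := by
  have h : ‖(-1 : ℚ_[p])‖ ≤ 1 := by simp
  rw [fdigit, dif_pos h]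
  have key : (-1 : ℤ_[p]) = ⟨(-1 : ℚ_[p]), h⟩ := Subtype.ext rfl
  rw [← key, map_neg, map_one]
  rcases p with _ | n
  · exact absurd (Fact.out (p := Nat.Prime 0)) (by norm_num)
  · simpa using ZMod.val_neg_one n

lemma aux_tau_neg_p : tau (-(p : ℚ_[p])) = -(p : ℚ_[p]) := by
  have hp1 : 1 ≤ p := (Fact.out (p := p.Prime)).one_lt.le
  rw [tau, aux_eps_neg_p]
  have h1 : (1 : ℚ_[p]) / (-1) = -1 := by norm_num
  rw [h1, aux_fdigit_neg_one]
  have : ((p - 1 : ℕ) : ℚ_[p]) = (p : ℚ_[p]) - 1 := by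
    push_cast [Nat.cast_sub hp1]; ring
  rw [this]; ring

lemma aux_tau_iter (n : ℕ) : tau^[n] (-(p : ℚ_[p])) = -(p : ℚ_[p]) :=
  Function.iterate_fixed aux_tau_neg_p n

end Aux

theorem neg_p_expansion_fixed (p : ℕ) [Fact p.Prime] :
    (-(p : ℚ_[p]) = ∑' n : ℕ, ((p : ℚ_[p]) - 1) * (p : ℚ_[p]) ^ (n + 1)) ∧
    schneiderF (-(p : ℚ_[p])) = -(p : ℚ_[p]) := by
  have hp1 : 1 ≤ p := (Fact.out (p := p.Prime)).one_lt.le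
  have hlt : ‖(p : ℚ_[p])‖ < 1 := Padic.norm_p_lt_one
  have hg := tsum_geometric_of_norm_lt_one hlt
  have h1 : (1 - (p : ℚ_[p])) ≠ 0 := by
    intro h
    rw [sub_eq_zero] at h
    rw [← h] at hlt
    simp at hlt
  have hsum : ∑' n : ℕ, ((p : ℚ_[p]) - 1) * (p : ℚ_[p]) ^ (n + 1) = -(p : ℚ_[p]) := by
    calc ∑' n : ℕ, ((p : ℚ_[p]) - 1) * (p : ℚ_[p]) ^ (n + 1)
        = ∑' n : ℕ, ((((p : ℚ_[p]) - 1) * p) * (p : ℚ_[p]) ^ n) := tsum_congr fun n => by ring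
      _ = (((p : ℚ_[p]) - 1) * p) * (1 - (p : ℚ_[p]))⁻¹ := by rw [tsum_mul_left, hg]
      _ = -(p : ℚ_[p]) := by field_simp; ring
  refine ⟨hsum.symm, ?_⟩
  have hterm : ∀ n : ℕ,
      (fdigit (1 / eps (tau^[n] (-(p : ℚ_[p])))) : ℚ_[p]) *
        ∏ m ∈ Finset.range (n + 1),
          (tau^[m] (-(p : ℚ_[p]))) / eps (tau^[m] (-(p : ℚ_[p]))) =
      ((p : ℚ_[p]) - 1) * (p : ℚ_[p]) ^ (n + 1) := by
    intro n
    have hprod : ∀ m : ℕ,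
        (tau^[m] (-(p : ℚ_[p]))) / eps (tau^[m] (-(p : ℚ_[p]))) = (p : ℚ_[p]) := by
      intro m
      rw [aux_tau_iter, aux_eps_neg_p]
      field_simp
    rw [aux_tau_iter, aux_eps_neg_p]
    have h1' : (1 : ℚ_[p]) / (-1) = -1 := by norm_num
    rw [h1', aux_fdigit_neg_one]
    rw [Finset.prod_congr rfl fun m _ => hprod m, Finset.prod_const, Finset.card_range]
    congr 1
    push_cast [Nat.cast_sub hp1]; ring
  rw [schneiderF, tsum_congr hterm, hsum]
end
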